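/- For a rack X, the twisted boundary ∂^T = t·∂^{(*_0)} − ∂^{(*)} on C_n^T(X) = ℤ[t^{±1}]X^n satisfies ∂^T ∂^T = 0, and for any x ∈ X the coordinatewise right-multiplication map *_x induces multiplication by t on twisted rack homology (via the chain homotopy h_x(x_1,...,x_n) = (x_1,...,x_n,x)). -/

import Mathlib

/-- The face map `d_i^{(*_0)}` (1-based index `i = p+1`): delete the `p`-th entry. -/
def faceZero {X : Type*} {n : ℕ} (p : Fin (n + 1)) (x : Fin (n + 1) → X) : Fin n → X :=
  fun j => x (p.succAbove j)

/-- The face map `d_i^{(*)}` (1-based index `i = p+1`): delete the `p`-th entry and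
act by `x_p` on all earlier entries. -/
def faceStar {X : Type*} (star : X → X → X) {n : ℕ} (p : Fin (n + 1))
    (x : Fin (n + 1) → X) : Fin n → X :=
  fun j => if (p.succAbove j : ℕ) < (p : ℕ) then star (x (p.succAbove j)) (x p)
           else x (p.succAbove j)

open LaurentPolynomial in
/-- The untwisted part `∂^{(*_0)} = Σ_{i=1}^n (-1)^i d_i^{(*_0)}` with Laurent
polynomial coefficients, on `C^T_{n+1}(X) = ℤ[t^{±1}]X^{n+1}`. -/
noncomputable def tBdZero (X : Type*) (n : ℕ) :
    ((Fin (n + 1) → X) →₀ LaurentPolynomial ℤ) →ₗ[LaurentPolynomial ℤ]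
      ((Fin n → X) →₀ LaurentPolynomial ℤ) :=
  ∑ p : Fin (n + 1), ((-1 : ℤ) ^ ((p : ℕ) + 1)) •
    Finsupp.lmapDomain (LaurentPolynomial ℤ) (LaurentPolynomial ℤ) (faceZero p)

/-- The part `∂^{(*)} = Σ_{i=1}^n (-1)^i d_i^{(*)}` with Laurent polynomial
coefficients. -/
noncomputable def tBdStar {X : Type*} (star : X → X → X) (n : ℕ) :
    ((Fin (n + 1) → X) →₀ LaurentPolynomial ℤ) →ₗ[LaurentPolynomial ℤ]
      ((Fin n → X) →₀ LaurentPolynomial ℤ) :=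
  ∑ p : Fin (n + 1), ((-1 : ℤ) ^ ((p : ℕ) + 1)) •
    Finsupp.lmapDomain (LaurentPolynomial ℤ) (LaurentPolynomial ℤ) (faceStar star p)

/-- The twisted boundary `∂^T = t·∂^{(*_0)} − ∂^{(*)}`. -/
noncomputable def tBd {X : Type*} (star : X → X → X) (n : ℕ) :
    ((Fin (n + 1) → X) →₀ LaurentPolynomial ℤ) →ₗ[LaurentPolynomial ℤ]
      ((Fin n → X) →₀ LaurentPolynomial ℤ) :=
  (LaurentPolynomial.T 1 : LaurentPolynomial ℤ) • tBdZero X n - tBdStar star n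

/-- Coordinatewise right translation `*_x` on `ℤ[t^{±1}]X^m`. -/
noncomputable def tMulMap {X : Type*} (star : X → X → X) (m : ℕ) (x : X) :
    ((Fin m → X) →₀ LaurentPolynomial ℤ) →ₗ[LaurentPolynomial ℤ]
      ((Fin m → X) →₀ LaurentPolynomial ℤ) :=
  Finsupp.lmapDomain (LaurentPolynomial ℤ) (LaurentPolynomial ℤ)
    (fun t : Fin m → X => fun j => star (t j) x)

/-- The homotopy `h_x(x_1,…,x_m) = (x_1,…,x_m,x)` on `ℤ[t^{±1}]X^m`. -/
noncomputable def tHMap {X : Type*} (m : ℕ) (x : X) :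
    ((Fin m → X) →₀ LaurentPolynomial ℤ) →ₗ[LaurentPolynomial ℤ]
      ((Fin (m + 1) → X) →₀ LaurentPolynomial ℤ) :=
  Finsupp.lmapDomain (LaurentPolynomial ℤ) (LaurentPolynomial ℤ)
    (fun t : Fin m → X => Fin.snoc t x)

/-!
The twisted faces `d_i^T = t d_i^{(*_0)} - d_i^{(*)}` satisfy the semi-simplicial identities
`d_i^T d_{k+1}^T = d_k^T d_i^T` for `i ≤ k`. On tuples,
`d_i^{(*₁)} d_{k+1}^{(*₂)} = d_k^{(*₂)} d_i^{(*₁)}` holds as soon as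
`(a *₂ c) *₁ (b *₂ c) = (a *₁ b) *₂ c`; for the four pairs drawn from `*` and the trivial
operation `a *_0 b = a` this is either trivial or right self-distributivity. So the alternating
sum of the twisted faces squares to zero, as for any semi-simplicial module. Appending `x`
commutes with every face except the last one, and the last twisted face sends
`(x_1, …, x_n, x)` to `t (x_1, …, x_n) - (x_1 * x, …, x_n * x)`; this gives the chain homotopy.
-/

theorem LinearMap.finset_sum_comp {R M N P ι : Type*} [Semiring R] [AddCommMonoid M]
    [AddCommMonoid N] [AddCommMonoid P] [Module R M] [Module R N] [Module R P]
    (s : Finset ι) (f : ι → M →ₗ[R] N) (g : P →ₗ[R] M) :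
    (∑ i ∈ s, f i).comp g = ∑ i ∈ s, (f i).comp g :=
  LinearMap.ext fun _ => by simp only [LinearMap.comp_apply, LinearMap.sum_apply]

theorem LinearMap.comp_finset_sum {R M N P ι : Type*} [Semiring R] [AddCommMonoid M]
    [AddCommMonoid N] [AddCommMonoid P] [Module R M] [Module R N] [Module R P]
    (s : Finset ι) (f : ι → P →ₗ[R] M) (g : M →ₗ[R] N) :
    g.comp (∑ i ∈ s, f i) = ∑ i ∈ s, g.comp (f i) :=
  map_sum (LinearMap.compRight ℕ g) f s

theorem alternating_sum_faces_comp_eq_zero {R : Type*} [Ring R] {M : ℕ → Type*}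
    [∀ n, AddCommGroup (M n)] [∀ n, Module R (M n)] (d : ∀ n, Fin (n + 1) → M (n + 1) →ₗ[R] M n)
    (hd : ∀ n (i k : Fin (n + 1)), i ≤ k →
      (d n i).comp (d (n + 1) k.succ) = (d n k).comp (d (n + 1) i.castSucc)) (n : ℕ) :
    (∑ i : Fin (n + 1), (-1 : ℤ) ^ ((i : ℕ) + 1) • d n i).comp
      (∑ j : Fin (n + 2), (-1 : ℤ) ^ ((j : ℕ) + 1) • d (n + 1) j) = 0 := by
  set c : Fin (n + 1) → Fin (n + 2) → (M (n + 2) →ₗ[R] M n) := fun i j =>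
    ((-1 : ℤ) ^ ((i : ℕ) + 1) * (-1 : ℤ) ^ ((j : ℕ) + 1)) • (d n i).comp (d (n + 1) j)
  have expand : (∑ i : Fin (n + 1), (-1 : ℤ) ^ ((i : ℕ) + 1) • d n i).comp
      (∑ j : Fin (n + 2), (-1 : ℤ) ^ ((j : ℕ) + 1) • d (n + 1) j) = ∑ i, ∑ j, c i j := by
    rw [LinearMap.finset_sum_comp]
    refine Finset.sum_congr rfl fun i _ => ?_
    rw [LinearMap.smul_comp, LinearMap.comp_finset_sum, Finset.smul_sum]
    refine Finset.sum_congr rfl fun j _ => ?_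
    rw [LinearMap.comp_smul, smul_smul]
  have split : ∀ i, ∑ j, c i j =
      ∑ k, (if i ≤ k then c i k.succ else 0) + ∑ l, (if l ≤ i then c i l.castSucc else 0) := by
    intro i
    calc ∑ j, c i j = ∑ j, ((if i.castSucc < j then c i j else 0) +
          (if j ≤ i.castSucc then c i j else 0)) :=
          Finset.sum_congr rfl fun j _ => by split_ifs <;> grind
      _ = _ := by
        rw [Finset.sum_add_distrib,
          Fin.sum_univ_succ (f := fun j => if i.castSucc < j then c i j else 0),
          Fin.sum_univ_castSucc (f := fun j => if j ≤ i.castSucc then c i j else 0)]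
        simp
  have cancel : ∀ i k : Fin (n + 1), i ≤ k → c i k.succ + c k i.castSucc = 0 := by
    intro i k hik
    have hsign : (-1 : ℤ) ^ ((i : ℕ) + 1) * (-1) ^ ((k : ℕ) + 1 + 1) +
        (-1) ^ ((k : ℕ) + 1) * (-1) ^ ((i : ℕ) + 1) = 0 := by ring
    simp only [c, hd n i k hik, ← add_smul, Fin.val_succ, Fin.val_castSucc, hsign, zero_smul]
  rw [expand, Finset.sum_congr rfl fun i _ => split i, Finset.sum_add_distrib,
    Finset.sum_comm (γ := Fin (n + 1)) (f := fun i l => if l ≤ i then c i l.castSucc else 0),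
    ← Finset.sum_add_distrib]
  refine Finset.sum_eq_zero fun i _ => ?_
  rw [← Finset.sum_add_distrib]
  refine Finset.sum_eq_zero fun k _ => ?_
  split_ifs with hik
  · exact cancel i k hik
  · exact add_zero 0

section Faces

variable {X : Type*} {n : ℕ}

theorem faceStar_apply_of_castSucc_lt (op : X → X → X) {p : Fin (n + 1)} (x : Fin (n + 1) → X)
    {j : Fin n} (h : j.castSucc < p) : faceStar op p x j = op (x j.castSucc) (x p) := by
  rw [faceStar, Fin.succAbove_of_castSucc_lt _ _ h, if_pos (Fin.lt_def.1 h)]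

theorem faceStar_apply_of_le_castSucc (op : X → X → X) {p : Fin (n + 1)} (x : Fin (n + 1) → X)
    {j : Fin n} (h : p ≤ j.castSucc) : faceStar op p x j = x j.succ := by
  have hsucc : ¬ j.succ < p := not_lt.2 (h.trans (Fin.castSucc_le_succ j))
  rw [faceStar, Fin.succAbove_of_le_castSucc _ _ h, if_neg (Fin.lt_def.not.1 hsucc)]

theorem faceStar_trivial_eq_faceZero (p : Fin (n + 1)) :
    faceStar (fun a _ => a) p = faceZero (X := X) p := by
  funext x j
  simp [faceStar, faceZero]

theorem faceStar_comp_faceStar (op₁ op₂ : X → X → X)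
    (hdist : ∀ a b c, op₁ (op₂ a c) (op₂ b c) = op₂ (op₁ a b) c) {i k : Fin (n + 1)}
    (hik : i ≤ k) :
    faceStar op₁ i ∘ faceStar op₂ k.succ = faceStar op₂ k ∘ faceStar op₁ i.castSucc := by
  funext x j
  simp only [Function.comp_apply]
  rcases lt_or_ge j.castSucc i with hji | hij
  · rw [faceStar_apply_of_castSucc_lt _ _ hji, faceStar_apply_of_castSucc_lt _ _ (by grind),
      faceStar_apply_of_castSucc_lt _ _ (by grind), faceStar_apply_of_castSucc_lt _ _ (by grind),
      faceStar_apply_of_castSucc_lt _ _ (by grind), faceStar_apply_of_le_castSucc _ _ (by grind),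
      hdist]
  rcases lt_or_ge j.castSucc k with hjk | hkj
  · rw [faceStar_apply_of_le_castSucc _ _ hij, faceStar_apply_of_castSucc_lt _ _ hjk,
      faceStar_apply_of_castSucc_lt _ _ (by grind), faceStar_apply_of_le_castSucc _ _ (by grind),
      faceStar_apply_of_le_castSucc _ _ (by grind), Fin.succ_castSucc]
  · rw [faceStar_apply_of_le_castSucc _ _ hij, faceStar_apply_of_le_castSucc _ _ hkj,
      faceStar_apply_of_le_castSucc _ _ (by grind), faceStar_apply_of_le_castSucc _ _ (by grind)]

theorem faceStar_castSucc_snoc (op : X → X → X) (p : Fin (n + 1)) (t : Fin (n + 1) → X)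
    (x : X) :
    faceStar op p.castSucc (Fin.snoc t x : Fin (n + 2) → X) = Fin.snoc (faceStar op p t) x := by
  funext j
  cases j using Fin.lastCases with
  | last =>
    rw [faceStar_apply_of_le_castSucc _ _ (Fin.castSucc_le_castSucc_iff.2 (Fin.le_last p)),
      Fin.succ_last, Fin.snoc_last, Fin.snoc_last]
  | cast j =>
    rw [Fin.snoc_castSucc]
    rcases lt_or_ge j.castSucc p with hjp | hpj
    · rw [faceStar_apply_of_castSucc_lt _ _ (Fin.castSucc_lt_castSucc_iff.2 hjp),
        faceStar_apply_of_castSucc_lt _ _ hjp, Fin.snoc_castSucc, Fin.snoc_castSucc]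
    · rw [faceStar_apply_of_le_castSucc _ _ (Fin.castSucc_le_castSucc_iff.2 hpj),
        faceStar_apply_of_le_castSucc _ _ hpj, Fin.succ_castSucc, Fin.snoc_castSucc]

theorem faceStar_last_snoc (op : X → X → X) (t : Fin (n + 1) → X) (x : X) :
    faceStar op (Fin.last (n + 1)) (Fin.snoc t x : Fin (n + 2) → X) = fun j => op (t j) x := by
  funext j
  rw [faceStar_apply_of_castSucc_lt _ _ (Fin.castSucc_lt_last j), Fin.snoc_castSucc, Fin.snoc_last]

end Faces

section TwistedFaces

open LaurentPolynomial Finsupp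

variable {X : Type*} (star : X → X → X)

noncomputable def tFace {n : ℕ} (p : Fin (n + 1)) :
    ((Fin (n + 1) → X) →₀ LaurentPolynomial ℤ) →ₗ[LaurentPolynomial ℤ]
      ((Fin n → X) →₀ LaurentPolynomial ℤ) :=
  (T 1 : LaurentPolynomial ℤ) • lmapDomain _ _ (faceZero p) - lmapDomain _ _ (faceStar star p)

theorem tBd_eq_sum_tFace (n : ℕ) :
    tBd star n = ∑ p : Fin (n + 1), (-1 : ℤ) ^ ((p : ℕ) + 1) • tFace star p := by
  calc tBd star n = ∑ p : Fin (n + 1), ((T 1 : LaurentPolynomial ℤ) •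
        ((-1 : ℤ) ^ ((p : ℕ) + 1) • lmapDomain _ _ (faceZero p)) -
          (-1 : ℤ) ^ ((p : ℕ) + 1) • lmapDomain _ _ (faceStar star p)) := by
        rw [tBd, tBdZero, tBdStar, Finset.smul_sum]
        exact (Finset.sum_sub_distrib (G := ((Fin (n + 1) → X) →₀ LaurentPolynomial ℤ) →ₗ[_]
          ((Fin n → X) →₀ LaurentPolynomial ℤ)) ..).symm
    _ = _ := Finset.sum_congr rfl fun p _ => by rw [tFace]; module

theorem tFace_comp_tFace (hsd : ∀ a b c : X, star (star a b) c = star (star a c) (star b c))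
    {n : ℕ} {i k : Fin (n + 1)} (hik : i ≤ k) :
    (tFace star i).comp (tFace star k.succ) = (tFace star k).comp (tFace star i.castSucc) := by
  simp only [tFace, ← faceStar_trivial_eq_faceZero, LinearMap.sub_comp, LinearMap.comp_sub,
    LinearMap.smul_comp, LinearMap.comp_smul, ← lmapDomain_comp]
  rw [faceStar_comp_faceStar (fun a _ => a) (fun a _ => a) (fun _ _ _ => rfl) hik,
    faceStar_comp_faceStar star (fun a _ => a) (fun _ _ _ => rfl) hik,
    faceStar_comp_faceStar (fun a _ => a) star (fun _ _ _ => rfl) hik,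
    faceStar_comp_faceStar star star (fun a b c => (hsd a b c).symm) hik]
  module

theorem tFace_castSucc_comp_tHMap {n : ℕ} (p : Fin (n + 1)) (x : X) :
    (tFace star p.castSucc).comp (tHMap (n + 1) x) = (tHMap n x).comp (tFace star p) := by
  have hsnoc (op : X → X → X) :
      faceStar op p.castSucc ∘ (fun t : Fin (n + 1) → X => Fin.snoc t x)
        = (fun t : Fin n → X => Fin.snoc t x) ∘ faceStar op p :=
    funext fun t => faceStar_castSucc_snoc op p t x
  simp only [tFace, tHMap, ← faceStar_trivial_eq_faceZero, LinearMap.sub_comp, LinearMap.comp_sub,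
    LinearMap.smul_comp, LinearMap.comp_smul, ← lmapDomain_comp, hsnoc]

theorem tFace_last_comp_tHMap (n : ℕ) (x : X) :
    (tFace star (Fin.last (n + 1))).comp (tHMap (n + 1) x) =
      (T 1 : LaurentPolynomial ℤ) • LinearMap.id - tMulMap star (n + 1) x := by
  have hsnoc (op : X → X → X) :
      faceStar op (Fin.last (n + 1)) ∘ (fun t : Fin (n + 1) → X => Fin.snoc t x)
        = fun t j => op (t j) x :=
    funext fun t => faceStar_last_snoc op t x
  simp only [tFace, tHMap, tMulMap, ← faceStar_trivial_eq_faceZero, LinearMap.sub_comp,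
    LinearMap.smul_comp, ← lmapDomain_comp, hsnoc]
  rw [← lmapDomain_id]
  rfl

theorem tBd_comp_tBd (hsd : ∀ a b c : X, star (star a b) c = star (star a c) (star b c))
    (n : ℕ) : (tBd star n).comp (tBd star (n + 1)) = 0 := by
  simp only [tBd_eq_sum_tFace]
  exact alternating_sum_faces_comp_eq_zero (M := fun m => (Fin m → X) →₀ LaurentPolynomial ℤ)
    (fun _ p => tFace star p) (fun _ _ _ hik => tFace_comp_tFace star hsd hik) n

theorem tBd_comp_tHMap (n : ℕ) (x : X) :
    (tBd star (n + 1)).comp (tHMap (n + 1) x) = (tHMap n x).comp (tBd star n) +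
      (-1 : ℤ) ^ (n + 2) •
        ((T 1 : LaurentPolynomial ℤ) • LinearMap.id - tMulMap star (n + 1) x) := by
  rw [tBd_eq_sum_tFace, tBd_eq_sum_tFace, LinearMap.finset_sum_comp, Fin.sum_univ_castSucc,
    LinearMap.comp_finset_sum]
  simp only [LinearMap.smul_comp, LinearMap.comp_smul, tFace_castSucc_comp_tHMap,
    tFace_last_comp_tHMap, Fin.val_castSucc, Fin.val_last]

end TwistedFaces

theorem stmt19_general {X : Type*} (star : X → X → X)
    (hsd : ∀ a b c : X, star (star a b) c = star (star a c) (star b c))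
    (n : ℕ) (x : X) :
    ((tBd star n).comp (tBd star (n + 1)) = 0) ∧
    (((-1 : ℤ) ^ (n + 2)) • ((tBd star (n + 1)).comp (tHMap (n + 1) x)) +
        ((-1 : ℤ) ^ (n + 1)) • ((tHMap n x).comp (tBd star n)) =
      (LaurentPolynomial.T 1 : LaurentPolynomial ℤ) • LinearMap.id -
        tMulMap star (n + 1) x) := by
  refine ⟨tBd_comp_tBd star hsd n, ?_⟩
  rw [tBd_comp_tHMap, smul_add, smul_smul, ← pow_add, Even.neg_one_pow ⟨n + 2, rfl⟩, one_smul,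
    pow_succ]
  module

/-- For a rack `X`: the twisted boundary satisfies `∂^T ∂^T = 0`, and for any
`x ∈ X` the map `*_x` is chain homotopic (via `(-1)^{m+1} h_x`) to `t·Id`;
hence `*_x` induces multiplication by `t` on twisted rack homology. -/
theorem stmt19 {X : Type*} (star : X → X → X)
    (hsd : ∀ a b c : X, star (star a b) c = star (star a c) (star b c))
    (hinv : ∀ b : X, Function.Bijective (fun a => star a b)) (n : ℕ) (x : X) :
    ((tBd star n).comp (tBd star (n + 1)) = 0) ∧
    (((-1 : ℤ) ^ (n + 2)) • ((tBd star (n + 1)).comp (tHMap (n + 1) x)) +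
        ((-1 : ℤ) ^ (n + 1)) • ((tHMap n x).comp (tBd star n)) =
      (LaurentPolynomial.T 1 : LaurentPolynomial ℤ) • LinearMap.id -
        tMulMap star (n + 1) x) :=
  stmt19_general star hsd n x
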